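/- arXiv:2511.23295 — 2 statements merged into one kernel-verified Lean document; each statement's English description precedes it below -/
import Mathlib

section
/- Fix σ > 0 and s ∈ ℝ, and let ℓ : (words over {1,2,3}) → ℝ be finitely supported. Then for every word v over {1,2,3}, the map t ↦ (ℓ|_{𝓔̃_{s−t}})(v) is differentiable and satisfies d/dt (ℓ|_{𝓔̃_{s−t}})(v) = −( (ℓ|_{𝓔̃_{s−t}})(v ++ (1)) + (σ²/2)·(ℓ|_{𝓔̃_{s−t}})(v ++ (2,2)) ). (This is the three-letter extension of Lemma 4.3 used in the proof of Proposition 5.7: for ℓ ∈ T(ℝ³), d/dt ℓ|_{𝓔̃_{s−t}} = −(ℓ|_{𝓔̃_{s−t}})▷1 − (σ²/2)(ℓ|_{𝓔̃_{s−t}})▷22.) -/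
noncomputable section

/-- Indicator (delta) function of a word. -/
def wordDelta (w : List ℕ) : List ℕ → ℝ := fun v => if v = w then 1 else 0

/-- Right projection `ℓ ▷ u`, defined by `(ℓ ▷ u)(v) = ℓ(v ++ u)`. -/
def rproj (f : List ℕ → ℝ) (u : List ℕ) : List ℕ → ℝ := fun v => f (v ++ u)

/-- Block decomposition of a word over `{1,2}` into blocks `(1)` and `(2,2)`:
returns `(n, m)` = (number of blocks, number of `(2,2)` blocks) if the word is
block-decomposable, `none` otherwise. -/
def blockCount : List ℕ → Option (ℕ × ℕ)
  | [] => some (0, 0)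
  | 1 :: w => (blockCount w).map fun p => (p.1 + 1, p.2)
  | 2 :: 2 :: w => (blockCount w).map fun p => (p.1 + 1, p.2 + 1)
  | _ => none

/-- Fawcett coefficient `𝓔_t(w) = a^m t^n / n!` (with `a = σ²/2`) for block-decomposable
words with `n` blocks of which `m` equal `(2,2)`, and `0` otherwise. -/
def fawcett (σ t : ℝ) (w : List ℕ) : ℝ :=
  match blockCount w with
  | some (n, m) => (σ ^ 2 / 2) ^ m * t ^ n / (n.factorial : ℝ)
  | none => 0

/-- `𝓔̃_t(w)`: equal to `𝓔_t(w)` if `w` contains no letter `3`, and `0` otherwise. -/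
def fawcettTil (σ t : ℝ) (w : List ℕ) : ℝ := if 3 ∈ w then 0 else fawcett σ t w

/-- Multiset of shuffles of two words, auxiliary (left/cons) recursion. -/
def shAux : List ℕ → List ℕ → Multiset (List ℕ)
  | [], w => {w}
  | v, [] => {v}
  | a :: v, b :: w =>
      ((shAux v (b :: w)).map fun u => a :: u) + ((shAux (a :: v) w).map fun u => b :: u)
termination_by v w => v.length + w.length

/-- Multiset of shuffles of two words; by construction it obeys the right-append recursion
`(v·i) ⧢ (w·j) = ((v ⧢ (w·j))·i) + (((v·i) ⧢ w)·j)`, `w ⧢ ∅ = ∅ ⧢ w = w`. -/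
def wordShuffles (v w : List ℕ) : Multiset (List ℕ) :=
  (shAux v.reverse w.reverse).map List.reverse

/-- Shuffle product of finitely supported functions on words: the bilinear extension of the
word shuffle (each word identified with its indicator function). -/
noncomputable def shuffle (f g : List ℕ → ℝ) : List ℕ → ℝ := fun u =>
  ∑' p : List ℕ × List ℕ, f p.1 * g p.2 * ((wordShuffles p.1 p.2).count u : ℝ)

def dfaw (σ t : ℝ) : List ℕ → ℝ
  | 1 :: u => fawcettTil σ t u
  | 2 :: 2 :: u => σ ^ 2 / 2 * fawcettTil σ t u
  | _ => 0

lemma hasDerivAt_monomial (c : ℝ) (n : ℕ) (t : ℝ) :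
    HasDerivAt (fun t : ℝ => c * t ^ (n + 1) / ((n + 1).factorial : ℝ))
      (c * t ^ n / (n.factorial : ℝ)) t := by
  have h := (((hasDerivAt_pow (n + 1) t).const_mul c).div_const (((n + 1).factorial : ℝ)))
  refine h.congr_deriv ?_
  have h1 : ((n + 1).factorial : ℝ) = (n + 1) * n.factorial := by
    rw [Nat.factorial_succ]; push_cast; ring
  have h2 : (n.factorial : ℝ) ≠ 0 := Nat.cast_ne_zero.mpr n.factorial_ne_zero
  rw [h1, Nat.add_sub_cancel]
  push_cast
  field_simp

lemma blockCount_other : ∀ w : List ℕ, (w = [] → False) → (∀ u, w = 1 :: u → False) →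
    (∀ u, w = 2 :: 2 :: u → False) → blockCount w = none
  | [], h, _, _ => absurd rfl h
  | 1 :: u, _, h, _ => absurd rfl (h u)
  | 2 :: 2 :: u, _, _, h => absurd rfl (h u)
  | 0 :: u, _, _, _ => rfl
  | [2], _, _, _ => rfl
  | 2 :: 0 :: u, _, _, _ => rfl
  | 2 :: 1 :: u, _, _, _ => rfl
  | 2 :: (k+3) :: u, _, _, _ => rfl
  | (k+3) :: u, _, _, _ => rfl

lemma hasDerivAt_zero_of_none (σ t : ℝ) (w : List ℕ) (hb : blockCount w = none) :
    HasDerivAt (fun t => fawcettTil σ t w) 0 t := by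
  have : (fun t => fawcettTil σ t w) = fun _ => 0 := by
    funext t; simp [fawcettTil, fawcett, hb]
  rw [this]; exact hasDerivAt_const t 0

lemma hasDerivAt_fawcettTil (σ : ℝ) (t : ℝ) :
    ∀ w : List ℕ, HasDerivAt (fun t => fawcettTil σ t w) (dfaw σ t w) t := by
  intro w
  match w with
  | [] =>
    have : (fun t => fawcettTil σ t ([] : List ℕ)) = fun _ => 1 := by
      funext t; simp [fawcettTil, fawcett, blockCount]
    rw [this]; show HasDerivAt _ (0:ℝ) t; exact hasDerivAt_const t 1
  | 1 :: u =>
    show HasDerivAt _ (fawcettTil σ t u) t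
    by_cases h3 : 3 ∈ u
    · have e1 : (fun t => fawcettTil σ t (1 :: u)) = fun _ => (0:ℝ) := by
        funext t; simp [fawcettTil, h3]
      have e2 : fawcettTil σ t u = 0 := by simp [fawcettTil, h3]
      rw [e1, e2]; exact hasDerivAt_const t 0
    · have e1 : ∀ t, fawcettTil σ t (1 :: u) = fawcett σ t (1 :: u) := by
        intro t; simp [fawcettTil, h3]
      have e2 : fawcettTil σ t u = fawcett σ t u := by simp [fawcettTil, h3]
      simp only [e1, e2]
      rcases h : blockCount u with _ | ⟨n, m⟩
      · have : ∀ t, fawcett σ t (1 :: u) = 0 := by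
          intro t; simp [fawcett, blockCount, h]
        have e3 : fawcett σ t u = 0 := by simp [fawcett, h]
        simp only [this, e3]; exact hasDerivAt_const t 0
      · have e3 : ∀ t, fawcett σ t (1 :: u) =
            (σ ^ 2 / 2) ^ m * t ^ (n + 1) / ((n + 1).factorial : ℝ) := by
          intro t; simp [fawcett, blockCount, h]
        have e4 : fawcett σ t u = (σ ^ 2 / 2) ^ m * t ^ n / (n.factorial : ℝ) := by
          simp [fawcett, h]
        simp only [e3, e4]
        exact hasDerivAt_monomial _ n t
  | 2 :: 2 :: u =>
    show HasDerivAt _ (σ ^ 2 / 2 * fawcettTil σ t u) t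
    by_cases h3 : 3 ∈ u
    · have e1 : (fun t => fawcettTil σ t (2 :: 2 :: u)) = fun _ => (0:ℝ) := by
        funext t; simp [fawcettTil, h3]
      have e2 : fawcettTil σ t u = 0 := by simp [fawcettTil, h3]
      rw [e1, e2, mul_zero]; exact hasDerivAt_const t 0
    · have e1 : ∀ t, fawcettTil σ t (2 :: 2 :: u) = fawcett σ t (2 :: 2 :: u) := by
        intro t; simp [fawcettTil, h3]
      have e2 : fawcettTil σ t u = fawcett σ t u := by simp [fawcettTil, h3]
      simp only [e1, e2]
      rcases h : blockCount u with _ | ⟨n, m⟩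
      · have : ∀ t, fawcett σ t (2 :: 2 :: u) = 0 := by
          intro t; simp [fawcett, blockCount, h]
        have e3 : fawcett σ t u = 0 := by simp [fawcett, h]
        simp only [this, e3, mul_zero]; exact hasDerivAt_const t 0
      · have e3 : ∀ t, fawcett σ t (2 :: 2 :: u) =
            (σ ^ 2 / 2) ^ (m + 1) * t ^ (n + 1) / ((n + 1).factorial : ℝ) := by
          intro t; simp [fawcett, blockCount, h]
        have e4 : σ ^ 2 / 2 * fawcett σ t u =
            (σ ^ 2 / 2) ^ (m + 1) * t ^ n / (n.factorial : ℝ) := by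
          simp [fawcett, h]; ring
        simp only [e3, e4]
        exact hasDerivAt_monomial _ n t
  | 0 :: u => exact hasDerivAt_zero_of_none σ t _ rfl
  | [2] => exact hasDerivAt_zero_of_none σ t _ rfl
  | 2 :: 0 :: u => exact hasDerivAt_zero_of_none σ t _ rfl
  | 2 :: 1 :: u => exact hasDerivAt_zero_of_none σ t _ rfl
  | 2 :: (k+3) :: u => exact hasDerivAt_zero_of_none σ t _ rfl
  | (k+3) :: u => exact hasDerivAt_zero_of_none σ t _ rfl

def pick1 (f : List ℕ → ℝ) : List ℕ → ℝ
  | 1 :: u => f u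
  | _ => 0

def pick22 (f : List ℕ → ℝ) : List ℕ → ℝ
  | 2 :: 2 :: u => f u
  | _ => 0

lemma pick1_cons (f : List ℕ → ℝ) (u : List ℕ) : pick1 f (1 :: u) = f u := rfl
lemma pick22_cons (f : List ℕ → ℝ) (u : List ℕ) : pick22 f (2 :: 2 :: u) = f u := rfl

lemma pick1_eq_zero : ∀ (f : List ℕ → ℝ) (w : List ℕ),
    (∀ u, w = 1 :: u → f u = 0) → pick1 f w = 0
  | _, [], _ => rfl
  | _, 1 :: u, h => h u rfl
  | _, 0 :: _, _ => rfl
  | _, (_+2) :: _, _ => rfl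

lemma pick22_eq_zero : ∀ (f : List ℕ → ℝ) (w : List ℕ),
    (∀ u, w = 2 :: 2 :: u → f u = 0) → pick22 f w = 0
  | _, [], _ => rfl
  | _, 0 :: _, _ => rfl
  | _, 1 :: _, _ => rfl
  | _, (_+3) :: _, _ => rfl
  | _, [2], _ => rfl
  | _, 2 :: 0 :: _, _ => rfl
  | _, 2 :: 1 :: _, _ => rfl
  | _, 2 :: 2 :: u, h => h u rfl
  | _, 2 :: (_+3) :: _, _ => rfl

lemma pick_split (σ t : ℝ) (c : List ℕ → ℝ) : ∀ w : List ℕ,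
    c w * dfaw σ t w = pick1 (fun u => c (1 :: u) * fawcettTil σ t u) w
      + pick22 (fun u => σ ^ 2 / 2 * c (2 :: 2 :: u) * fawcettTil σ t u) w
  | [] => by show c [] * 0 = 0 + 0; ring
  | 1 :: u => by
      show c (1 :: u) * fawcettTil σ t u = c (1 :: u) * fawcettTil σ t u + 0; ring
  | 2 :: 2 :: u => by
      show c (2 :: 2 :: u) * (σ ^ 2 / 2 * fawcettTil σ t u)
        = 0 + σ ^ 2 / 2 * c (2 :: 2 :: u) * fawcettTil σ t u; ring
  | 0 :: u => by show c (0 :: u) * 0 = 0 + 0; ring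
  | [2] => by show c [2] * 0 = 0 + 0; ring
  | 2 :: 0 :: u => by show c (2 :: 0 :: u) * 0 = 0 + 0; ring
  | 2 :: 1 :: u => by show c (2 :: 1 :: u) * 0 = 0 + 0; ring
  | 2 :: (k+3) :: u => by show c (2 :: (k+3) :: u) * 0 = 0 + 0; ring
  | (k+3) :: u => by show c ((k+3) :: u) * 0 = 0 + 0; ring

/-- three-letter extension of Lemma 4.3, used in Proposition 5.7.
For `σ > 0`, `s ∈ ℝ` and finitely supported `ℓ` on words over `{1,2,3}`, the map
`t ↦ (ℓ|_{𝓔̃_{s−t}})(v) = Σ_w ℓ(v ++ w)·𝓔̃_{s−t}(w)` is differentiable with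
`d/dt (ℓ|_{𝓔̃_{s−t}})(v) = −((ℓ|_{𝓔̃_{s−t}})(v ++ (1)) + (σ²/2)(ℓ|_{𝓔̃_{s−t}})(v ++ (2,2)))`. -/
theorem stmt2 (σ s : ℝ) (hσ : 0 < σ)
    (ℓ : List ℕ → ℝ) (hfin : (Function.support ℓ).Finite)
    (halpha : ∀ w : List ℕ, ℓ w ≠ 0 → ∀ l ∈ w, l = 1 ∨ l = 2 ∨ l = 3)
    (v : List ℕ) (t : ℝ) :
    HasDerivAt (fun r => ∑' w : List ℕ, ℓ (v ++ w) * fawcettTil σ (s - r) w)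
      (-((∑' w : List ℕ, ℓ ((v ++ [1]) ++ w) * fawcettTil σ (s - t) w)
          + σ ^ 2 / 2 * ∑' w : List ℕ, ℓ ((v ++ [2, 2]) ++ w) * fawcettTil σ (s - t) w)) t := by
  have hSv : ((fun w => v ++ w) ⁻¹' Function.support ℓ).Finite :=
    hfin.preimage ((List.append_right_injective v).injOn)
  set Fv : Finset (List ℕ) := hSv.toFinset with hFv
  have hmem : ∀ w : List ℕ, w ∉ Fv → ℓ (v ++ w) = 0 := by
    intro w hw
    by_contra h
    exact hw (by simp [hFv, Set.Finite.mem_toFinset, Function.mem_support, h])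
  -- rewrite the tsum as a finite sum
  have hfun : (fun r => ∑' w : List ℕ, ℓ (v ++ w) * fawcettTil σ (s - r) w)
      = fun r => ∑ w ∈ Fv, ℓ (v ++ w) * fawcettTil σ (s - r) w := by
    funext r
    exact tsum_eq_sum fun b hb => by rw [hmem b hb, zero_mul]
  -- the derivative of the finite sum
  have hinner : HasDerivAt (fun r : ℝ => s - r) (-1) t := by
    simpa using (hasDerivAt_id t).const_sub s
  have hder : HasDerivAt (fun r => ∑ w ∈ Fv, ℓ (v ++ w) * fawcettTil σ (s - r) w)
      (∑ w ∈ Fv, ℓ (v ++ w) * (dfaw σ (s - t) w * (-1))) t := by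
    refine HasDerivAt.fun_sum fun w _ => HasDerivAt.const_mul _ ?_
    exact (hasDerivAt_fawcettTil σ (s - t) w).comp t hinner
  rw [hfun]
  convert hder using 1
  -- identify the derivative
  set t' := s - t with ht'
  have hsum1 : ∑ w ∈ Fv, ℓ (v ++ w) * (dfaw σ t' w * (-1))
      = -∑ w ∈ Fv, ℓ (v ++ w) * dfaw σ t' w := by
    rw [← Finset.sum_neg_distrib]
    exact Finset.sum_congr rfl fun w _ => by ring
  rw [hsum1, neg_inj]
  -- back to a tsum
  have hts : ∑ w ∈ Fv, ℓ (v ++ w) * dfaw σ t' w = ∑' w : List ℕ, ℓ (v ++ w) * dfaw σ t' w :=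
    (tsum_eq_sum fun b hb => by rw [hmem b hb, zero_mul]).symm
  set G1 : List ℕ → ℝ := fun u => ℓ (v ++ 1 :: u) * fawcettTil σ t' u with hG1
  set G2 : List ℕ → ℝ := fun u => σ ^ 2 / 2 * ℓ (v ++ 2 :: 2 :: u) * fawcettTil σ t' u with hG2
  have hsplit : ∀ w, ℓ (v ++ w) * dfaw σ t' w = pick1 G1 w + pick22 G2 w :=
    pick_split σ t' (fun w => ℓ (v ++ w))
  have hsupp1 : ∀ w ∉ Fv, pick1 G1 w = 0 := by
    intro w hw
    refine pick1_eq_zero _ _ fun u hu => ?_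
    rw [hG1]; simp only
    rw [← hu, hmem w hw, zero_mul]
  have hsupp2 : ∀ w ∉ Fv, pick22 G2 w = 0 := by
    intro w hw
    refine pick22_eq_zero _ _ fun u hu => ?_
    rw [hG2]; simp only
    rw [← hu, hmem w hw, mul_zero, zero_mul]
  have hsumm1 : Summable (pick1 G1) := summable_of_ne_finset_zero hsupp1
  have hsumm2 : Summable (pick22 G2) := summable_of_ne_finset_zero hsupp2
  have hrange1 : Function.support (pick1 G1) ⊆ Set.range (List.cons 1) := by
    intro w hw
    by_contra h
    exact hw (pick1_eq_zero _ _ fun u hu => absurd ⟨u, hu.symm⟩ h)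
  have hrange2 : Function.support (pick22 G2) ⊆ Set.range (fun u => 2 :: 2 :: u) := by
    intro w hw
    by_contra h
    exact hw (pick22_eq_zero _ _ fun u hu => absurd ⟨u, hu.symm⟩ h)
  have hinj2 : Function.Injective (fun u : List ℕ => 2 :: 2 :: u) :=
    fun a b h => List.cons_injective (List.cons_injective h)
  symm
  calc ∑ w ∈ Fv, ℓ (v ++ w) * dfaw σ t' w
      = ∑' w : List ℕ, (pick1 G1 w + pick22 G2 w) := by
        rw [hts]; exact tsum_congr hsplit
    _ = (∑' w : List ℕ, pick1 G1 w) + ∑' w : List ℕ, pick22 G2 w := Summable.tsum_add hsumm1 hsumm2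
    _ = (∑' u : List ℕ, G1 u) + ∑' u : List ℕ, G2 u := by
        rw [← List.cons_injective.tsum_eq hrange1 (f := pick1 G1),
          ← hinj2.tsum_eq hrange2 (f := pick22 G2)]
        simp [pick1_cons, pick22_cons]
    _ = (∑' w : List ℕ, ℓ ((v ++ [1]) ++ w) * fawcettTil σ t' w)
          + σ ^ 2 / 2 * ∑' w : List ℕ, ℓ ((v ++ [2, 2]) ++ w) * fawcettTil σ t' w := by
        rw [← tsum_mul_left]
        congr 1
        · exact tsum_congr fun u => by rw [hG1]; simp [List.append_assoc]
        · exact tsum_congr fun u => by rw [hG2]; simp only [List.append_assoc, List.cons_append, List.nil_append]; ring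
end
end

section
/- Let η, λ, σ, T > 0 with μ = 0, let 0 ≤ ν < c := √(2ηλσ²), X₀ ∈ ℝ, Γ ∈ ℝ with |νΓ| < 1, and let f(t) := (1/(2(1−νΓ)))·( ν + c·tanh( (c(1−νΓ)/(2η))·(T−t) − (1/2)·ln((c+ν)/(c−ν)) ) ). Working with finitely supported functions on words over {1,2,3}, set β := δ_{(3)} + X₀·δ_{∅} − Γ·δ_{(2)} and ψ_t := f(t)·(β ⧢ β) + σ²Γ²·(∫_t^T f(s) ds)·δ_{∅}. Then ψ_T = 0 and, for every t ∈ ℝ and every word v over {1,2,3}, d/dt ψ_t(v) = −ψ_t(v ++ (1)) − (σ²/2)·ψ_t(v ++ (2,2)) − (λσ²/2)·(β ⧢ β)(v) + (1/(4η))·(ρ_t ⧢ ρ_t)(v), where ρ_t := ν·β − ( ν·(ψ_t▷2) + (ψ_t▷3) ). (This is the Riccati-solution part of Proposition 5.8: for the European quadratic payoff ξ = Γ·e₂⊗e₂, for which ξ̃_t = Γ·δ_{(2)} is constant in t, ψ solves the infinite-dimensional Riccati system (5.13) with μ = 0, stated coefficientwise.) -/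
noncomputable section

open MeasureTheory

/- ### Auxiliary lemmas -/

set_option maxHeartbeats 1000000

lemma tanh_hasDerivAt (x : ℝ) : HasDerivAt Real.tanh (1 - Real.tanh x ^ 2) x := by
  have h := (Real.hasDerivAt_sinh x).div (Real.hasDerivAt_cosh x) (Real.cosh_pos x).ne'
  have hfun : (fun y => Real.sinh y / Real.cosh y) = Real.tanh := by
    funext y; rw [Real.tanh_eq_sinh_div_cosh]
  rw [show (Real.sinh / Real.cosh) = Real.tanh from hfun] at h
  refine h.congr_deriv ?_
  have hc := (Real.cosh_pos x).ne'
  rw [Real.tanh_eq_sinh_div_cosh]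
  field_simp

lemma tanh_half_log {r : ℝ} (hr : 0 < r) :
    Real.tanh (1 / 2 * Real.log r) = (r - 1) / (r + 1) := by
  set x := 1 / 2 * Real.log r with hx
  have hy : 0 < Real.exp x := Real.exp_pos _
  have hy2 : Real.exp x * Real.exp x = r := by
    rw [← Real.exp_add]
    have : x + x = Real.log r := by rw [hx]; ring
    rw [this, Real.exp_log hr]
  rw [Real.tanh_eq_sinh_div_cosh, Real.sinh_eq, Real.cosh_eq, Real.exp_neg]
  rw [← hy2]
  have h1 : Real.exp x ≠ 0 := hy.ne'
  have h2 : Real.exp x * Real.exp x + 1 > 0 := by positivity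
  field_simp

lemma cat_inj {v w : List ℕ} {a b : ℕ} : v ++ [a] = w ++ [b] ↔ v = w ∧ a = b := by
  constructor
  · intro h
    obtain ⟨h1, h2⟩ := List.append_inj' h rfl
    exact ⟨h1, by injection h2⟩
  · rintro ⟨rfl, rfl⟩; rfl

lemma wd_cat (w v : List ℕ) (a b : ℕ) :
    wordDelta (w ++ [b]) (v ++ [a]) = if a = b then wordDelta w v else 0 := by
  simp only [wordDelta, cat_inj]
  by_cases h1 : a = b <;> by_cases h2 : v = w <;> simp [h1, h2]

lemma wd1_cat (b : ℕ) (v : List ℕ) (a : ℕ) :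
    wordDelta [b] (v ++ [a]) = if a = b then wordDelta [] v else 0 := wd_cat [] v a b

lemma wd2_cat (x b : ℕ) (v : List ℕ) (a : ℕ) :
    wordDelta [x, b] (v ++ [a]) = if a = b then wordDelta [x] v else 0 := wd_cat [x] v a b

lemma wd_nil_cat (v : List ℕ) (a : ℕ) : wordDelta [] (v ++ [a]) = 0 := by
  simp [wordDelta]

lemma ws_nn : wordShuffles [] [] = {[]} := by simp [wordShuffles, shAux]
lemma ws_n2 : wordShuffles [] [2] = {[2]} := by simp [wordShuffles, shAux]
lemma ws_2n : wordShuffles [2] [] = {[2]} := by simp [wordShuffles, shAux]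
lemma ws_n3 : wordShuffles [] [3] = {[3]} := by simp [wordShuffles, shAux]
lemma ws_3n : wordShuffles [3] [] = {[3]} := by simp [wordShuffles, shAux]
lemma ws_22 : wordShuffles [2] [2] = {[2,2],[2,2]} := by simp [wordShuffles, shAux]
lemma ws_23 : wordShuffles [2] [3] = {[2,3],[3,2]} := by simp [wordShuffles, shAux]; decide
lemma ws_32 : wordShuffles [3] [2] = {[3,2],[2,3]} := by simp [wordShuffles, shAux]; decide
lemma ws_33 : wordShuffles [3] [3] = {[3,3],[3,3]} := by simp [wordShuffles, shAux]

lemma shuffle_eval (X₀ Γ : ℝ) (β : List ℕ → ℝ)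
    (hβ : ∀ v, β v = wordDelta [3] v + X₀ * wordDelta [] v - Γ * wordDelta [2] v)
    (u : List ℕ) :
    shuffle β β u = X₀ ^ 2 * wordDelta [] u - 2 * Γ * X₀ * wordDelta [2] u
      + 2 * X₀ * wordDelta [3] u + 2 * Γ ^ 2 * wordDelta [2, 2] u
      - 2 * Γ * wordDelta [2, 3] u - 2 * Γ * wordDelta [3, 2] u
      + 2 * wordDelta [3, 3] u := by
  have hβnil : β [] = X₀ := by simp [hβ, wordDelta]
  have hβ2 : β [2] = -Γ := by simp [hβ, wordDelta]
  have hβ3 : β [3] = 1 := by simp [hβ, wordDelta]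
  have hβ0 : ∀ w, w ∉ ({[], [2], [3]} : Finset (List ℕ)) → β w = 0 := by
    intro w hw
    simp only [Finset.mem_insert, Finset.mem_singleton, not_or] at hw
    simp [hβ, wordDelta, hw.1, hw.2.1, hw.2.2]
  rw [show shuffle β β u
      = ∑' p : List ℕ × List ℕ, β p.1 * β p.2 * ((wordShuffles p.1 p.2).count u : ℝ) from rfl]
  rw [tsum_eq_sum
    (s := ({[], [2], [3]} : Finset (List ℕ)) ×ˢ ({[], [2], [3]} : Finset (List ℕ)))]
  · rw [Finset.sum_product]
    norm_num [Finset.sum_insert, Finset.mem_insert, Finset.mem_singleton, Finset.sum_singleton]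
    rw [ws_nn, ws_n2, ws_2n, ws_n3, ws_3n, ws_22, ws_23, ws_32, ws_33]
    simp only [hβnil, hβ2, hβ3, wordDelta, Multiset.insert_eq_cons, Multiset.count_cons,
      Multiset.count_singleton]
    split_ifs <;> simp_all <;> ring
  · rintro ⟨p1, p2⟩ hp
    simp only [Finset.mem_product, not_and_or] at hp
    rcases hp with h | h
    · rw [hβ0 _ h]; ring
    · rw [hβ0 _ h]; ring

/-- Riccati-solution part of Proposition 5.8, European quadratic payoff
`ξ = Γ·e₂⊗e₂`, stated coefficientwise. With `c := √(2ηλσ²)`, `0 ≤ ν < c`, `|νΓ| < 1`,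
`f(t) = (1/(2(1−νΓ)))·(ν + c·tanh((c(1−νΓ)/(2η))(T−t) − ½ ln((c+ν)/(c−ν))))`,
`β = δ₍₃₎ + X₀·δ_∅ − Γ·δ₍₂₎` and `ψ_t = f(t)·(β ⧢ β) + σ²Γ²·(∫_t^T f(s) ds)·δ_∅`:
then `ψ_T = 0` and, for every `t ∈ ℝ` and every word `v` over `{1,2,3}`,
`d/dt ψ_t(v) = −ψ_t(v ++ (1)) − (σ²/2)ψ_t(v ++ (2,2)) − (λσ²/2)(β ⧢ β)(v)
 + (1/(4η))(ρ_t ⧢ ρ_t)(v)` with `ρ_t = ν·β − (ν·(ψ_t▷2) + ψ_t▷3)`. -/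
theorem stmt12 (η lam σ T ν Γ c X₀ : ℝ)
    (hη : 0 < η) (hlam : 0 < lam) (hσ : 0 < σ) (hT : 0 < T)
    (hc : c = Real.sqrt (2 * η * lam * σ ^ 2))
    (hν : 0 ≤ ν) (hνc : ν < c) (hΓ : |ν * Γ| < 1)
    (f : ℝ → ℝ)
    (hf : ∀ t, f t = 1 / (2 * (1 - ν * Γ)) *
      (ν + c * Real.tanh (c * (1 - ν * Γ) / (2 * η) * (T - t)
        - 1 / 2 * Real.log ((c + ν) / (c - ν)))))
    (β : List ℕ → ℝ)
    (hβ : ∀ v, β v = wordDelta [3] v + X₀ * wordDelta [] v - Γ * wordDelta [2] v)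
    (ψ : ℝ → List ℕ → ℝ)
    (hψ : ∀ t v, ψ t v
      = f t * shuffle β β v + σ ^ 2 * Γ ^ 2 * (∫ s in t..T, f s) * wordDelta [] v)
    (ρ : ℝ → List ℕ → ℝ)
    (hρ : ∀ t v, ρ t v = ν * β v - (ν * rproj (ψ t) [2] v + rproj (ψ t) [3] v)) :
    (∀ v : List ℕ, ψ T v = 0)
      ∧ ∀ (t : ℝ) (v : List ℕ),
        HasDerivAt (fun r => ψ r v)
          (-(ψ t (v ++ [1])) - σ ^ 2 / 2 * ψ t (v ++ [2, 2])
            - lam * σ ^ 2 / 2 * shuffle β β v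
            + 1 / (4 * η) * shuffle (ρ t) (ρ t) v) t := by
  have h1Γ : (0:ℝ) < 1 - ν * Γ := by
    have := (abs_lt.mp hΓ).2; linarith
  have h1Γ' : (1:ℝ) - ν * Γ ≠ 0 := ne_of_gt h1Γ
  have hc0 : 0 < c := lt_of_le_of_lt hν hνc
  have hcν : 0 < c - ν := by linarith
  have hc2 : c ^ 2 = 2 * η * lam * σ ^ 2 := by
    rw [hc, Real.sq_sqrt]; positivity
  set k : ℝ := c * (1 - ν * Γ) / (2 * η) with hk
  set L : ℝ := 1 / 2 * Real.log ((c + ν) / (c - ν)) with hL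
  set θ : ℝ → ℝ := fun t => k * (T - t) - L with hθdef
  have hfθ : ∀ t, f t = 1 / (2 * (1 - ν * Γ)) * (ν + c * Real.tanh (θ t)) := hf
  -- values of the shuffle square of β at appended words
  have hA := shuffle_eval X₀ Γ β hβ
  have hA1 : ∀ v, shuffle β β (v ++ [1]) = 0 := by
    intro v
    rw [hA]
    simp [wd1_cat, wd2_cat, wd_nil_cat]
  have hA2 : ∀ v, shuffle β β (v ++ [2]) = -2 * Γ * β v := by
    intro v
    rw [hA, hβ]
    simp only [wd1_cat, wd2_cat, wd_nil_cat]
    norm_num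
    ring
  have hA3 : ∀ v, shuffle β β (v ++ [3]) = 2 * β v := by
    intro v
    rw [hA, hβ]
    simp only [wd1_cat, wd2_cat, wd_nil_cat]
    norm_num
    ring
  have hcat2 : ∀ v : List ℕ, v ++ [2, 2] = (v ++ [2]) ++ [2] := by simp
  have hA22 : ∀ v, shuffle β β (v ++ [2, 2]) = 2 * Γ ^ 2 * wordDelta [] v := by
    intro v
    rw [hcat2, hA2, hβ]
    simp only [wd1_cat, wd_nil_cat]
    norm_num
    ring
  -- f T = 0
  have htanhT : Real.tanh (θ T) = -(ν / c) := by
    have hθT : θ T = -L := by simp [hθdef]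
    rw [hθT, Real.tanh_neg, hL, tanh_half_log (by positivity : (0:ℝ) < (c + ν) / (c - ν))]
    rw [neg_inj]
    field_simp
    ring
  have hfT : f T = 0 := by
    rw [hfθ, htanhT]
    field_simp
    ring
  -- derivative of f
  have hf' : ∀ t, HasDerivAt f (-(c ^ 2) / (4 * η) * (1 - Real.tanh (θ t) ^ 2)) t := by
    intro t
    have hθ' : HasDerivAt θ (-k) t := by
      have h1 : HasDerivAt (fun t : ℝ => T - t) (-1) t := (hasDerivAt_id t).const_sub T
      have h2 := (h1.const_mul k).sub_const L
      exact h2.congr_deriv (by ring)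
    have ht := (tanh_hasDerivAt (θ t)).comp t hθ'
    have h3 := ((ht.const_mul c).const_add ν).const_mul (1 / (2 * (1 - ν * Γ)))
    have hfe : f = fun t => 1 / (2 * (1 - ν * Γ)) * (ν + c * Real.tanh (θ t)) := funext hfθ
    rw [hfe]
    refine h3.congr_deriv ?_
    rw [hk]
    field_simp
    ring
  have hfc : Continuous f := continuous_iff_continuousAt.2 fun t => (hf' t).continuousAt
  have hF' : ∀ t, HasDerivAt (fun r => ∫ s in r..T, f s) (-f t) t := fun t =>
    intervalIntegral.integral_hasDerivAt_left (hfc.intervalIntegrable t T)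
      (hfc.stronglyMeasurableAtFilter _ _) hfc.continuousAt
  constructor
  · intro v
    rw [hψ, hfT, intervalIntegral.integral_same]
    ring
  · intro t v
    -- ρ t is a multiple of β
    have hρfun : ρ t = fun w => (ν - 2 * (1 - ν * Γ) * f t) * β w := by
      funext w
      rw [hρ, show rproj (ψ t) [2] w = ψ t (w ++ [2]) from rfl,
        show rproj (ψ t) [3] w = ψ t (w ++ [3]) from rfl, hψ, hψ, hA2, hA3,
        wd_nil_cat, wd_nil_cat]
      ring
    have hρρ : shuffle (ρ t) (ρ t) v
        = (ν - 2 * (1 - ν * Γ) * f t) ^ 2 * shuffle β β v := by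
      rw [hρfun]
      rw [show shuffle (fun w => (ν - 2 * (1 - ν * Γ) * f t) * β w)
            (fun w => (ν - 2 * (1 - ν * Γ) * f t) * β w) v
          = ∑' p : List ℕ × List ℕ, ((ν - 2 * (1 - ν * Γ) * f t) * β p.1)
            * ((ν - 2 * (1 - ν * Γ) * f t) * β p.2)
            * ((wordShuffles p.1 p.2).count v : ℝ) from rfl,
        show shuffle β β v
          = ∑' p : List ℕ × List ℕ, β p.1 * β p.2
            * ((wordShuffles p.1 p.2).count v : ℝ) from rfl,
        ← tsum_mul_left]
      exact tsum_congr fun p => by ring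
    have hg : ν - 2 * (1 - ν * Γ) * f t = -(c * Real.tanh (θ t)) := by
      rw [hfθ]
      field_simp
      ring
    have hψfun : (fun r => ψ r v) = fun r => f r * shuffle β β v
        + σ ^ 2 * Γ ^ 2 * (∫ s in r..T, f s) * wordDelta [] v := funext fun r => hψ r v
    have hd : HasDerivAt (fun r => ψ r v)
        ((-(c ^ 2) / (4 * η) * (1 - Real.tanh (θ t) ^ 2)) * shuffle β β v
          + (σ ^ 2 * Γ ^ 2 * -f t) * wordDelta [] v) t := by
      rw [hψfun]
      exact ((hf' t).mul_const _).add (((hF' t).const_mul (σ ^ 2 * Γ ^ 2)).mul_const _)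
    convert hd using 1
    rw [hψ t (v ++ [1]), hψ t (v ++ [2, 2]), hA1, hA22, wd_nil_cat, hcat2 v,
      wd_nil_cat, hρρ, hg]
    linear_combination (shuffle β β v / (4 * η)) * hc2
      + σ ^ 2 * lam * shuffle β β v / 2 * (mul_inv_cancel₀ (ne_of_gt hη))
end
end
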